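/- In the robot domain with the agent action sequence α1 = [comm(I0), move(I0,I1), move(I1,I2), move(I2,I3)] and effect φ1 = Vul, the following hold: ¬PCauses(comm(I0), 0, φ1, α1); CCauses(move(I0,I1), 1, φ1, α1); PCauses(move(I1,I2), 2, φ1, α1); ¬CCauses(move(I1,I2), 2, φ1, α1); and ¬PCauses(move(I2,I3), 3, φ1, α1). -/
import Mathlib


inductive Loc | I0 | I1 | I2 | I3
deriving DecidableEq

inductive React | Vul | NotVul | Succ
deriving DecidableEq

inductive SysAct
  | move : Loc → Loc → React → SysAct
  | comm : Loc → React → SysAct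
deriving DecidableEq

/-- A situation is the list of system actions executed so far, most recent first; `S0 = []`. -/
abbrev Sit := List SysAct

def doAct (a : SysAct) (s : Sit) : Sit := a :: s

def time (s : Sit) : ℕ := s.length

def SubHist (s1 s2 : Sit) : Prop := s1 <:+ s2

def PSubHist (s1 s2 : Sit) : Prop := s1 <:+ s2 ∧ s1 ≠ s2

def Connected (i j : Loc) : Prop :=
  (i = .I0 ∧ j = .I1) ∨ (i = .I1 ∧ j = .I0) ∨
  (i = .I1 ∧ j = .I2) ∨ (i = .I2 ∧ j = .I1) ∨
  (i = .I2 ∧ j = .I3) ∨ (i = .I3 ∧ j = .I2)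

def At : Loc → Sit → Prop
  | j, [] => j = .I0
  | j, a :: s => (∃ i e, a = .move i j e) ∨ (At j s ∧ ∀ j' e', a ≠ .move j j' e')

def VulF : Sit → Prop
  | [] => False
  | a :: s => (∃ i j, a = .move i j .Vul) ∨ VulF s

def Risky (i : Loc) (_ : Sit) : Prop := i = .I1 ∨ i = .I2

def Poss : SysAct → Sit → Prop
  | .move i j e, s => At i s ∧ Connected i j ∧
      (Risky j s → (e = .Vul ∨ e = .NotVul)) ∧ (¬ Risky j s → e = .NotVul)
  | .comm i e, s => ¬ VulF s ∧ ¬ Risky i s ∧ e = .Succ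

def CausesDirectly (a : SysAct) (ts : ℕ) (φ : Sit → Prop) (s : Sit) : Prop :=
  ∃ s_a : Sit, time s_a = ts ∧ PSubHist [] (doAct a s_a) ∧ SubHist (doAct a s_a) s ∧
    ¬ φ s_a ∧ ∀ s', SubHist (doAct a s_a) s' → SubHist s' s → φ s'

inductive Causes : SysAct → ℕ → (Sit → Prop) → Sit → Prop
  | direct {a : SysAct} {ts : ℕ} {φ : Sit → Prop} {s : Sit} :
      CausesDirectly a ts φ s → Causes a ts φ s
  | indirect {a : SysAct} {ts : ℕ} {φ : Sit → Prop} {s : Sit}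
      (a' : SysAct) (ts' : ℕ) (s' : Sit) :
      CausesDirectly a' ts' φ s → time s' = ts' → PSubHist s' s →
      Causes a ts (fun σ => Poss a' σ ∧ φ (doAct a' σ)) s' →
      Causes a ts φ s

inductive AgAct
  | move : Loc → Loc → AgAct
  | comm : Loc → AgAct

/-- The system action obtained by pairing an agent action with an environment reaction. -/
def sys : AgAct → React → SysAct
  | .move i j, e => .move i j e
  | .comm i, e => .comm i e

def DoAg : List AgAct → Sit → Sit → Prop
  | [], s, s' => s = s'
  | A :: σ, s, s' => ∃ e, Poss (sys A e) s ∧ DoAg σ (doAct (sys A e) s) s'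

def PCauses (β : AgAct) (t : ℕ) (φ : Sit → Prop) (α : List AgAct) : Prop :=
  ∃ s, DoAg α [] s ∧ φ s ∧ ∃ e, Causes (sys β e) t φ s

def CCauses (β : AgAct) (t : ℕ) (φ : Sit → Prop) (α : List AgAct) : Prop :=
  ∀ s, DoAg α [] s → φ s → ∃ e, Causes (sys β e) t φ s

def alpha1 : List AgAct := [.comm .I0, .move .I0 .I1, .move .I1 .I2, .move .I2 .I3]

section Aux

@[simp] lemma At_nil (j : Loc) : At j [] ↔ j = .I0 := Iff.rfl

@[simp] lemma At_comm_cons (j i : Loc) (e : React) (s : Sit) :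
    At j (.comm i e :: s) ↔ At j s := by
  constructor
  · rintro (⟨i', e', h⟩ | ⟨h, _⟩)
    · exact absurd h (by simp)
    · exact h
  · intro h; exact Or.inr ⟨h, by intro j' e' hne; exact absurd hne (by simp)⟩

@[simp] lemma At_move_cons (j i k : Loc) (e : React) (s : Sit) :
    At j (.move i k e :: s) ↔ k = j ∨ (At j s ∧ i ≠ j) := by
  constructor
  · rintro (⟨i', e', h⟩ | ⟨h, hne⟩)
    · injection h with h1 h2 h3; exact Or.inl h2
    · refine Or.inr ⟨h, fun hij => ?_⟩
      exact hne k e (by rw [hij])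
  · rintro (rfl | ⟨h, hne⟩)
    · exact Or.inl ⟨i, e, rfl⟩
    · refine Or.inr ⟨h, fun j' e' hc => ?_⟩
      injection hc with h1 h2 h3; exact hne h1

@[simp] lemma VulF_nil : VulF [] ↔ False := Iff.rfl

@[simp] lemma VulF_move_cons (i j : Loc) (e : React) (s : Sit) :
    VulF (.move i j e :: s) ↔ e = .Vul ∨ VulF s := by
  constructor
  · rintro (⟨i', j', h⟩ | h)
    · injection h with h1 h2 h3; exact Or.inl h3
    · exact Or.inr h
  · rintro (rfl | h)
    · exact Or.inl ⟨i, j, rfl⟩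
    · exact Or.inr h

@[simp] lemma VulF_comm_cons (i : Loc) (e : React) (s : Sit) :
    VulF (.comm i e :: s) ↔ VulF s := by
  constructor
  · rintro (⟨i', j', h⟩ | h)
    · exact absurd h (by simp)
    · exact h
  · exact Or.inr

lemma VulF_cons (a : SysAct) (s : Sit) (h : VulF s) : VulF (a :: s) := by
  cases a <;> simp [h]

lemma VulF_suffix {s1 s2 : Sit} (h : s1 <:+ s2) (hv : VulF s1) : VulF s2 := by
  obtain ⟨l, rfl⟩ := h
  induction l with
  | nil => exact hv
  | cons a l ih => exact VulF_cons a _ ih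

def CommInv (φ : Sit → Prop) : Prop :=
  ∀ (i : Loc) (e : React) (l m : Sit), φ (l ++ .comm i e :: m) ↔ φ (l ++ m)

lemma At_comm_inv (j i : Loc) (e : React) :
    ∀ (l m : Sit), At j (l ++ .comm i e :: m) ↔ At j (l ++ m) := by
  intro l m
  induction l with
  | nil => simp
  | cons a l ih => cases a <;> simp [ih]

lemma VulF_comm_inv (i : Loc) (e : React) :
    ∀ (l m : Sit), VulF (l ++ .comm i e :: m) ↔ VulF (l ++ m) := by
  intro l m
  induction l with
  | nil => simp
  | cons a l ih => cases a <;> simp [ih]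

lemma Poss_comm_inv (a : SysAct) (i : Loc) (e : React) (l m : Sit) :
    Poss a (l ++ .comm i e :: m) ↔ Poss a (l ++ m) := by
  cases a with
  | move i' j' e' => simp only [Poss, Risky, At_comm_inv]
  | comm i' e' => simp only [Poss, Risky, VulF_comm_inv]

lemma commInv_VulF : CommInv VulF := fun i e l m => VulF_comm_inv i e l m

lemma commInv_wrap {φ : Sit → Prop} (h : CommInv φ) (a' : SysAct) :
    CommInv (fun σ => Poss a' σ ∧ φ (doAct a' σ)) := by
  intro i e l m
  simp only [doAct]
  constructor
  · rintro ⟨h1, h2⟩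
    exact ⟨(Poss_comm_inv a' i e l m).mp h1, by
      have := (h i e (a' :: l) m).mp (by simpa using h2); simpa using this⟩
  · rintro ⟨h1, h2⟩
    exact ⟨(Poss_comm_inv a' i e l m).mpr h1, by
      have := (h i e (a' :: l) m).mpr (by simpa using h2); simpa using this⟩

lemma causes_leaf : ∀ {a : SysAct} {ts : ℕ} {φ : Sit → Prop} {s : Sit},
    Causes a ts φ s → CommInv φ →
    ∃ s' φ', SubHist s' s ∧ CommInv φ' ∧ CausesDirectly a ts φ' s' := by
  intro a ts φ s h
  induction h with
  | direct hd => exact fun hinv => ⟨_, _, List.suffix_refl _, hinv, hd⟩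
  | indirect a' ts' s' hd ht hps _ ih =>
      intro hinv
      obtain ⟨sk, φk, hsk, hinvk, hdk⟩ := ih (commInv_wrap hinv a')
      exact ⟨sk, φk, hsk.trans hps.1, hinvk, hdk⟩

lemma psub_length_lt {s1 s2 : Sit} (h : PSubHist s1 s2) : s1.length < s2.length := by
  rcases lt_or_eq_of_le h.1.length_le with hlt | heq
  · exact hlt
  · exact absurd (h.1.eq_of_length heq) h.2

lemma doAg_alpha1 {s : Sit} : DoAg alpha1 [] s ↔
    ∃ e2 e3, (e2 = React.Vul ∨ e2 = React.NotVul) ∧ (e3 = React.Vul ∨ e3 = React.NotVul) ∧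
      s = [.move .I2 .I3 .NotVul, .move .I1 .I2 e3, .move .I0 .I1 e2, .comm .I0 .Succ] := by
  constructor
  · rintro ⟨e1, h1, e2, h2, e3, h3, e4, h4, rfl⟩
    simp only [sys, doAct] at *
    obtain ⟨-, -, he1⟩ := h1
    subst he1
    have he4 : e4 = React.NotVul := h4.2.2.2 (by simp [Risky])
    subst he4
    exact ⟨e2, e3, h2.2.2.1 (Or.inl rfl), h3.2.2.1 (Or.inr rfl), rfl⟩
  · rintro ⟨e2, e3, h2, h3, rfl⟩
    refine ⟨.Succ, ?_, e2, ?_, e3, ?_, .NotVul, ?_, rfl⟩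
    · exact ⟨by simp, by simp [Risky], rfl⟩
    · exact ⟨by simp [sys, doAct], Or.inl ⟨rfl, rfl⟩,
        fun _ => h2, fun h => absurd (Or.inl rfl) h⟩
    · exact ⟨by simp [sys, doAct], Or.inr (Or.inr (Or.inl ⟨rfl, rfl⟩)),
        fun _ => h3, fun h => absurd (Or.inr rfl) h⟩
    · exact ⟨by simp [sys, doAct], Or.inr (Or.inr (Or.inr (Or.inr (Or.inl ⟨rfl, rfl⟩)))),
        fun h => absurd h (by simp [Risky]), fun _ => rfl⟩

end Aux

theorem robot_nd_causes_alpha1 :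
    ¬ PCauses (.comm .I0) 0 VulF alpha1 ∧
    CCauses (.move .I0 .I1) 1 VulF alpha1 ∧
    PCauses (.move .I1 .I2) 2 VulF alpha1 ∧
    ¬ CCauses (.move .I1 .I2) 2 VulF alpha1 ∧
    ¬ PCauses (.move .I2 .I3) 3 VulF alpha1 := by
  refine ⟨?_, ?_, ?_, ?_, ?_⟩
  · -- 1: comm never causes VulF
    rintro ⟨s, -, -, e, hc⟩
    obtain ⟨sk, φk, -, hinvk, sa, hlen, -, hsub, hnφ, hall⟩ :=
      causes_leaf hc commInv_VulF
    have hsa : sa = [] := List.length_eq_zero_iff.mp hlen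
    subst hsa
    have hφ : φk [SysAct.comm .I0 e] := hall _ (List.suffix_refl _) hsub
    exact hnφ ((hinvk .I0 e [] []).mp hφ)
  · -- 2: CCauses (move I0 I1)
    intro s hdo hv
    rw [doAg_alpha1] at hdo
    obtain ⟨e2, e3, he2, he3, rfl⟩ := hdo
    rcases he2 with rfl | rfl
    · -- e2 = Vul: direct cause
      refine ⟨.Vul, Causes.direct ⟨[.comm .I0 .Succ], rfl,
        ⟨List.nil_suffix, by simp [doAct]⟩, ⟨[_, _], rfl⟩, by simp, ?_⟩⟩
      intro s' h1 h2
      exact VulF_suffix h1 (by simp [sys, doAct])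
    · -- e2 = NotVul: then e3 = Vul, indirect cause
      have he3' : e3 = .Vul := by
        simp [sys, doAct] at hv; exact hv
      subst he3'
      refine ⟨.NotVul, Causes.indirect (.move .I1 .I2 .Vul) 2
        [.move .I0 .I1 .NotVul, .comm .I0 .Succ] ?_ rfl ⟨⟨[_, _], rfl⟩, by simp⟩ ?_⟩
      · refine ⟨[.move .I0 .I1 .NotVul, .comm .I0 .Succ], rfl,
          ⟨List.nil_suffix, by simp [doAct]⟩, ⟨[_], rfl⟩, by simp, ?_⟩
        intro s' h1 h2
        exact VulF_suffix h1 (by simp [doAct])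
      · apply Causes.direct
        refine ⟨[.comm .I0 .Succ], rfl, ⟨List.nil_suffix, by simp [doAct]⟩,
          List.suffix_refl _, ?_, ?_⟩
        · rintro ⟨hp, -⟩
          simpa [Poss] using hp.1
        · intro s'' h1 h2
          have hs : s'' = [SysAct.move .I0 .I1 .NotVul, .comm .I0 .Succ] :=
            h2.eq_of_length (le_antisymm h2.length_le h1.length_le)
          subst hs
          exact ⟨⟨by simp, Or.inr (Or.inr (Or.inl ⟨rfl, rfl⟩)),
            fun _ => Or.inl rfl, fun h => absurd (Or.inr rfl) h⟩, by simp [doAct]⟩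
  · -- 3: PCauses (move I1 I2)
    refine ⟨[.move .I2 .I3 .NotVul, .move .I1 .I2 .Vul, .move .I0 .I1 .NotVul, .comm .I0 .Succ],
      doAg_alpha1.mpr ⟨.NotVul, .Vul, Or.inr rfl, Or.inl rfl, rfl⟩, by simp,
      .Vul, Causes.direct ?_⟩
    refine ⟨[.move .I0 .I1 .NotVul, .comm .I0 .Succ], rfl,
      ⟨List.nil_suffix, by simp [doAct]⟩, ⟨[_], rfl⟩, by simp, ?_⟩
    intro s' h1 h2
    exact VulF_suffix h1 (by simp [sys, doAct])
  · -- 4: ¬ CCauses (move I1 I2)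
    intro hcc
    obtain ⟨e, hc⟩ := hcc
      [.move .I2 .I3 .NotVul, .move .I1 .I2 .NotVul, .move .I0 .I1 .Vul, .comm .I0 .Succ]
      (doAg_alpha1.mpr ⟨.Vul, .NotVul, Or.inl rfl, Or.inr rfl, rfl⟩) (by simp)
    cases hc with
    | direct hd =>
        obtain ⟨sa, hlen, -, hsub, hnv, -⟩ := hd
        simp only [time] at hlen
        rcases List.suffix_cons_iff.mp hsub with h | hsub
        · have := congrArg List.length h
          simp [doAct] at this
          omega
        rcases List.suffix_cons_iff.mp hsub with h | hsub
        · simp only [doAct, sys, List.cons_eq_cons] at h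
          obtain ⟨h1, h2⟩ := h
          subst h2
          exact hnv (by simp)
        · have := hsub.length_le
          simp [doAct] at this
          omega
    | indirect a' ts' s' hd ht hps hin =>
        obtain ⟨sk, φk, hsk, -, sa, hlen, -, hsub2, -, -⟩ :=
          causes_leaf hin (commInv_wrap commInv_VulF a')
        have h1 : 3 ≤ sk.length := by
          have := hsub2.length_le
          simp only [time] at hlen
          simp [doAct] at this
          omega
        have h2 : sk.length ≤ s'.length := hsk.length_le
        have h3 : s'.length < 4 := by
          have := psub_length_lt hps
          simpa using this
        obtain ⟨t, htl, -, htsub, hnvt, -⟩ := hd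
        have htl3 : t.length = 3 := by
          simp only [time] at htl ht
          omega
        have heq : doAct a' t =
            [SysAct.move .I2 .I3 .NotVul, .move .I1 .I2 .NotVul, .move .I0 .I1 .Vul,
             .comm .I0 .Succ] :=
          htsub.eq_of_length (by simp [doAct, htl3])
        simp only [doAct, List.cons_eq_cons] at heq
        obtain ⟨-, ht3⟩ := heq
        subst ht3
        exact hnvt (by simp)
  · -- 5: ¬ PCauses (move I2 I3)
    rintro ⟨s, hdo, hv, e, hc⟩
    rw [doAg_alpha1] at hdo
    obtain ⟨e2, e3, he2, he3, rfl⟩ := hdo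
    cases hc with
    | direct hd =>
        obtain ⟨sa, hlen, -, hsub, hnv, hall⟩ := hd
        simp only [time] at hlen
        have heq : doAct (sys (.move .I2 .I3) e) sa =
            [SysAct.move .I2 .I3 .NotVul, .move .I1 .I2 e3, .move .I0 .I1 e2,
             .comm .I0 .Succ] :=
          hsub.eq_of_length (by simp [doAct, sys, hlen])
        have hphi := hall _ (List.suffix_refl _) hsub
        rw [heq] at hphi
        simp only [doAct, sys, List.cons_eq_cons] at heq
        obtain ⟨he, hsa⟩ := heq
        subst hsa
        simp at hphi
        exact hnv (by simpa using hphi)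
    | indirect a' ts' s' hd ht hps hin =>
        obtain ⟨sk, φk, hsk, -, sa, hlen, -, hsub2, -, -⟩ :=
          causes_leaf hin (commInv_wrap commInv_VulF a')
        have h1 : 4 ≤ sk.length := by
          have := hsub2.length_le
          simp only [time] at hlen
          simp [doAct] at this
          omega
        have h2 : sk.length ≤ s'.length := hsk.length_le
        have h3 : s'.length < 4 := by
          have := psub_length_lt hps
          simpa using this
        omega
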